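/- arXiv:1207.1698 — 4 statements merged into one kernel-verified Lean document; each statement's English description precedes it below -/
import Mathlib

section
/- Let I ⊂ ℝ be an open interval, a, b ∈ I with a < b, f : I → ℝ a twice differentiable mapping such that f'' is integrable on [a,b], let q ≥ 1, and suppose |f''|^q belongs to the Godunova-Levin class Q(I). Then |(1/6)·(f(a) + 4·f((a+b)/2) + f(b)) − (1/(b−a))·∫ₐᵇ f(x) dx| ≤ ((b−a)²/2) · (1/81)^(1 − 1/q) · { ( (5/72)·|f''(a)|^q + ((2/3)·ln(8/9) + 7/72)·|f''(b)|^q )^(1/q) + ( ((2/3)·ln(8/9) + 7/72)·|f''(a)|^q + (5/72)·|f''(b)|^q )^(1/q) }. -/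
/-!
Two integrations by parts against the Peano kernels `simpsonKernel a b` on `[a, (a+b)/2]` and
`simpsonKernel b a` on `[(a+b)/2, b]` express the Simpson error through `f''`, and the reflection
`x ↦ a + b - x` carries the right half onto the left one. On `[a, (a+b)/2]`, Hölder's inequality
with weight `|simpsonKernel a b|`, of total mass `(b-a)^3/162`, reduces the estimate to
`∫ |simpsonKernel a b| |f''|^q`. Writing `x = λa + (1-λ)b`, the Godunova–Levin inequality bounds
`|f''(x)|^q` by `|f''(a)|^q (b-a)/(b-x) + |f''(b)|^q (b-a)/(x-a)`, and the two resulting integrals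
are elementary; the first one produces the logarithm.
-/

open MeasureTheory Set Real

/-- A nonnegative function `g` belongs to the Godunova–Levin class `Q(I)` if for all
`x, y ∈ I` and `l ∈ (0,1)` one has `g (l*x + (1-l)*y) ≤ g x / l + g y / (1-l)`. -/
def GodunovaLevin (I : Set ℝ) (g : ℝ → ℝ) : Prop :=
  (∀ x ∈ I, 0 ≤ g x) ∧
    ∀ x ∈ I, ∀ y ∈ I, ∀ l : ℝ, 0 < l → l < 1 →
      g (l * x + (1 - l) * y) ≤ g x / l + g y / (1 - l)

theorem memLp_ofReal_of_integrable_rpow {α : Type*} [MeasurableSpace α] {μ : Measure α}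
    {g : α → ℝ} {r : ℝ} (hr : 0 < r) (hg0 : ∀ x, 0 ≤ g x) (hg : AEStronglyMeasurable g μ)
    (hint : Integrable (fun x => g x ^ r) μ) : MemLp g (ENNReal.ofReal r) μ := by
  rw [← integrable_norm_rpow_iff hg (by simpa using hr) ENNReal.ofReal_ne_top,
    ENNReal.toReal_ofReal hr.le]
  exact hint.congr (.of_forall fun x => by simp [Real.norm_of_nonneg (hg0 x)])

theorem integral_weighted_le_rpow_mul_rpow {α : Type*} [MeasurableSpace α] {μ : Measure α}
    {w φ : α → ℝ} {q : ℝ} (hq : 1 ≤ q) (hw0 : ∀ x, 0 ≤ w x) (hφ0 : ∀ x, 0 ≤ φ x)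
    (hw : Integrable w μ) (hφ : AEStronglyMeasurable φ μ)
    (hwφ : Integrable (fun x => w x * φ x ^ q) μ) :
    ∫ x, w x * φ x ∂μ ≤ (∫ x, w x ∂μ) ^ (1 - 1 / q) * (∫ x, w x * φ x ^ q ∂μ) ^ (1 / q) := by
  rcases hq.eq_or_lt with rfl | hq
  · simp
  have hpq : (q / (q - 1)).HolderConjugate q := (Real.HolderConjugate.conjExponent hq).symm
  have hp : 1 / (q / (q - 1)) = 1 - 1 / q := by field_simp [(sub_pos.2 hq).ne']
  set p := q / (q - 1)
  -- Hölder for `w ^ (1/p)` and `w ^ (1/q) * φ`, with `p` the conjugate exponent of `q`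
  have hw_pow : ∀ x, (w x ^ (1 / p)) ^ p = w x := fun x => by
    rw [← rpow_mul (hw0 x), one_div_mul_cancel hpq.ne_zero, rpow_one]
  have hwφ_pow : ∀ x, (w x ^ (1 / q) * φ x) ^ q = w x * φ x ^ q := fun x => by
    rw [mul_rpow (rpow_nonneg (hw0 x) _) (hφ0 x), ← rpow_mul (hw0 x),
      one_div_mul_cancel hpq.symm.ne_zero, rpow_one]
  have hmul : ∀ x, w x ^ (1 / p) * (w x ^ (1 / q) * φ x) = w x * φ x := fun x => by
    rw [← mul_assoc, ← rpow_add' (hw0 x) (by rw [hpq.one_div_add_one_div]; norm_num),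
      hpq.one_div_add_one_div, div_one, rpow_one]
  have hwm := hw.aestronglyMeasurable.aemeasurable
  have holder := integral_mul_le_Lp_mul_Lq_of_nonneg hpq
    (.of_forall fun x => rpow_nonneg (hw0 x) (1 / p))
    (.of_forall fun x => mul_nonneg (rpow_nonneg (hw0 x) (1 / q)) (hφ0 x))
    (memLp_ofReal_of_integrable_rpow hpq.pos (fun x => rpow_nonneg (hw0 x) _)
      (hwm.pow_const _).aestronglyMeasurable (by simpa only [hw_pow] using hw))
    (memLp_ofReal_of_integrable_rpow hpq.symm.pos
      (fun x => mul_nonneg (rpow_nonneg (hw0 x) _) (hφ0 x))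
      ((hwm.pow_const _).mul hφ.aemeasurable).aestronglyMeasurable
      (by simpa only [hwφ_pow] using hwφ))
  simp only [hmul, hw_pow, hwφ_pow] at holder
  rwa [hp] at holder

theorem mul_rpow_one_sub_mul_mul_rpow {A u v r : ℝ} (hA : 0 ≤ A) (hu : 0 ≤ u) (hv : 0 ≤ v) :
    (A * u) ^ (1 - r) * (A * v) ^ r = A * (u ^ (1 - r) * v ^ r) := by
  rw [mul_rpow hA hu, mul_rpow hA hv, mul_mul_mul_comm, ← rpow_add' hA (by norm_num),
    sub_add_cancel, rpow_one]

theorem integral_mul_deriv_deriv_eq {u u' u'' v v' v'' : ℝ → ℝ} {s t : ℝ}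
    (hu : ∀ x ∈ uIcc s t, HasDerivAt u (u' x) x)
    (hu' : ∀ x ∈ uIcc s t, HasDerivAt u' (u'' x) x)
    (hv : ∀ x ∈ uIcc s t, HasDerivAt v (v' x) x)
    (hv' : ∀ x ∈ uIcc s t, HasDerivAt v' (v'' x) x)
    (hu'' : IntervalIntegrable u'' volume s t) (hv'' : IntervalIntegrable v'' volume s t) :
    ∫ x in s..t, u x * v'' x
      = u t * v' t - u s * v' s - (u' t * v t - u' s * v s) + ∫ x in s..t, u'' x * v x := by
  have hcont {g g' : ℝ → ℝ} (h : ∀ x ∈ uIcc s t, HasDerivAt g (g' x) x) :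
      IntervalIntegrable g volume s t :=
    ContinuousOn.intervalIntegrable fun x hx => (h x hx).continuousAt.continuousWithinAt
  rw [intervalIntegral.integral_mul_deriv_eq_deriv_mul hu hv' (hcont hu') hv'',
    intervalIntegral.integral_mul_deriv_eq_deriv_mul hu' hv hu'' (hcont hv')]
  ring

theorem integral_abs_eq_of_sign_change {G g : ℝ → ℝ} {s c t : ℝ} (hsc : s ≤ c) (hct : c ≤ t)
    (hG : ∀ x ∈ Icc s t, HasDerivAt G (g x) x) (hg : IntervalIntegrable g volume s t)
    (hneg : ∀ x ∈ Icc s c, g x ≤ 0) (hpos : ∀ x ∈ Icc c t, 0 ≤ g x) :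
    ∫ x in s..t, |g x| = G s + G t - 2 * G c := by
  have hst : uIcc s t = Icc s t := uIcc_of_le (hsc.trans hct)
  have hsc' : uIcc s c ⊆ Icc s t := by rw [uIcc_of_le hsc]; exact Icc_subset_Icc_right hct
  have hct' : uIcc c t ⊆ Icc s t := by rw [uIcc_of_le hct]; exact Icc_subset_Icc_left hsc
  rw [← intervalIntegral.integral_add_adjacent_intervals (b := c)
      (hg.abs.mono_set (hst ▸ hsc')) (hg.abs.mono_set (hst ▸ hct')),
    intervalIntegral.integral_congr (g := fun x => -g x)
      fun x hx => abs_of_nonpos (hneg x (uIcc_of_le hsc ▸ hx)),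
    intervalIntegral.integral_congr (g := g)
      fun x hx => abs_of_nonneg (hpos x (uIcc_of_le hct ▸ hx)),
    intervalIntegral.integral_neg,
    intervalIntegral.integral_eq_sub_of_hasDerivAt (fun x hx => hG x (hsc' hx))
      (hg.mono_set (hst ▸ hsc')),
    intervalIntegral.integral_eq_sub_of_hasDerivAt (fun x hx => hG x (hct' hx))
      (hg.mono_set (hst ▸ hct'))]
  ring

theorem GodunovaLevin.le_of_mem_Ioo {I : Set ℝ} {g : ℝ → ℝ} (hg : GodunovaLevin I g)
    {a b x : ℝ} (ha : a ∈ I) (hb : b ∈ I) (hx : x ∈ Ioo a b) :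
    g x ≤ g a * ((b - a) / (b - x)) + g b * ((b - a) / (x - a)) := by
  obtain ⟨hax, hxb⟩ := hx
  have hba : 0 < b - a := by linarith
  have hl : (b - x) / (b - a) * a + (1 - (b - x) / (b - a)) * b = x := by field_simp; ring
  have h1l : 1 - (b - x) / (b - a) = (x - a) / (b - a) := by field_simp; ring
  have := hg.2 a ha b hb ((b - x) / (b - a)) (div_pos (by linarith) hba)
    ((div_lt_one hba).2 (by linarith))
  rwa [hl, h1l, div_div_eq_mul_div, div_div_eq_mul_div, mul_div_assoc, mul_div_assoc] at this

noncomputable def simpsonKernel (a b x : ℝ) : ℝ := (x - a) * (x - (2 * a + b) / 3) / 2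

theorem hasDerivAt_simpsonKernel (a b x : ℝ) :
    HasDerivAt (simpsonKernel a b) (x - (5 * a + b) / 6) x := by
  have := (((hasDerivAt_id' x).sub_const a).mul
    ((hasDerivAt_id' x).sub_const ((2 * a + b) / 3))).div_const 2
  exact this.congr_deriv (by ring)

theorem simpsonKernel_swap_reflect (a b x : ℝ) :
    simpsonKernel b a (a + b - x) = simpsonKernel a b x := by
  unfold simpsonKernel; ring

theorem integral_simpsonKernel_mul_add {f f' f'' : ℝ → ℝ} {a b : ℝ}
    (hf : ∀ x ∈ uIcc a b, HasDerivAt f (f' x) x)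
    (hf' : ∀ x ∈ uIcc a b, HasDerivAt f' (f'' x) x)
    (hf'' : IntervalIntegrable f'' volume a b) :
    (∫ x in a..(a + b) / 2, simpsonKernel a b x * f'' x)
        + ∫ x in (a + b) / 2..b, simpsonKernel b a x * f'' x
      = (∫ x in a..b, f x) - (b - a) / 6 * (f a + 4 * f ((a + b) / 2) + f b) := by
  have hm : (a + b) / 2 ∈ uIcc a b := by
    rcases le_total a b with h | h
    · exact mem_uIcc.2 (.inl ⟨by linarith, by linarith⟩)
    · exact mem_uIcc.2 (.inr ⟨by linarith, by linarith⟩)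
  have hL : uIcc a ((a + b) / 2) ⊆ uIcc a b := uIcc_subset_uIcc_left hm
  have hR : uIcc ((a + b) / 2) b ⊆ uIcc a b := uIcc_subset_uIcc_right hm
  have hfi : IntervalIntegrable f volume a b :=
    ContinuousOn.intervalIntegrable fun x hx => (hf x hx).continuousAt.continuousWithinAt
  have hlin (c : ℝ) (x : ℝ) : HasDerivAt (fun y => y - c) 1 x := (hasDerivAt_id' x).sub_const c
  rw [integral_mul_deriv_deriv_eq (fun x _ => hasDerivAt_simpsonKernel a b x) (fun x _ => hlin _ x)
      (fun x hx => hf x (hL hx)) (fun x hx => hf' x (hL hx)) intervalIntegrable_const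
      (hf''.mono_set hL),
    integral_mul_deriv_deriv_eq (fun x _ => hasDerivAt_simpsonKernel b a x) (fun x _ => hlin _ x)
      (fun x hx => hf x (hR hx)) (fun x hx => hf' x (hR hx)) intervalIntegrable_const
      (hf''.mono_set hR),
    ← intervalIntegral.integral_add_adjacent_intervals (b := (a + b) / 2)
      (hfi.mono_set hL) (hfi.mono_set hR)]
  simp only [simpsonKernel, one_mul]
  ring

theorem integral_simpsonKernel_swap (a b : ℝ) (g : ℝ → ℝ) :
    ∫ x in (a + b) / 2..b, simpsonKernel b a x * g x
      = ∫ x in a..(a + b) / 2, simpsonKernel a b x * g (a + b - x) := by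
  simp_rw [← simpsonKernel_swap_reflect a b]
  rw [intervalIntegral.integral_comp_sub_left (fun x => simpsonKernel b a x * g x)]
  congr 1 <;> ring

theorem continuous_simpsonKernel (a b : ℝ) : Continuous (simpsonKernel a b) :=
  continuous_iff_continuousAt.2 fun x => (hasDerivAt_simpsonKernel a b x).continuousAt

theorem integral_abs_simpsonKernel {a b : ℝ} (hab : a ≤ b) :
    ∫ x in a..(a + b) / 2, |simpsonKernel a b x| = (b - a) ^ 3 / 162 := by
  have hG (x : ℝ) : HasDerivAt (fun x => (x - a) ^ 3 / 6 - (b - a) * (x - a) ^ 2 / 12)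
      (simpsonKernel a b x) x := by
    have := ((((hasDerivAt_id' x).sub_const a).pow 3).div_const 6).sub
      ((((hasDerivAt_id' x).sub_const a).pow 2).const_mul (b - a) |>.div_const 12)
    exact this.congr_deriv (by unfold simpsonKernel; push_cast; ring)
  rw [integral_abs_eq_of_sign_change (c := (2 * a + b) / 3) (by linarith) (by linarith)
    (fun x _ => hG x) ((continuous_simpsonKernel a b).intervalIntegrable _ _)
    (fun x hx => by unfold simpsonKernel; nlinarith [hx.1, hx.2])
    (fun x hx => by unfold simpsonKernel; nlinarith [hx.1, hx.2])]
  ring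

theorem integral_abs_sub_div_two {a b : ℝ} (hab : a ≤ b) :
    ∫ x in a..(a + b) / 2, |(x - (2 * a + b) / 3) / 2| = 5 * (b - a) ^ 2 / 144 := by
  have hG (x : ℝ) : HasDerivAt (fun x => (x - (2 * a + b) / 3) ^ 2 / 4)
      ((x - (2 * a + b) / 3) / 2) x := by
    have := (((hasDerivAt_id' x).sub_const ((2 * a + b) / 3)).pow 2).div_const 4
    exact this.congr_deriv (by push_cast; ring)
  rw [integral_abs_eq_of_sign_change (c := (2 * a + b) / 3) (by linarith) (by linarith)
    (fun x _ => hG x)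
    ((by fun_prop : Continuous fun x : ℝ => (x - (2 * a + b) / 3) / 2).intervalIntegrable _ _)
    (fun x hx => by linarith [hx.2]) (fun x hx => by linarith [hx.1])]
  ring

theorem continuousOn_simpsonKernel_div (a b : ℝ) :
    ContinuousOn (fun x => simpsonKernel a b x / (b - x)) (Iio b) :=
  (continuous_simpsonKernel a b).continuousOn.div (by fun_prop) fun _ hx => (sub_pos.2 hx).ne'

theorem integral_abs_simpsonKernel_div {a b : ℝ} (hab : a < b) :
    ∫ x in a..(a + b) / 2, |simpsonKernel a b x / (b - x)|
      = 7 * (b - a) ^ 2 / 144 + (b - a) ^ 2 / 3 * log (8 / 9) := by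
  have hm : (a + b) / 2 < b := by linarith
  have hG (x : ℝ) (hx : x ∈ Icc a ((a + b) / 2)) :
      HasDerivAt (fun x => -(b - x) ^ 2 / 4 - 5 * (b - a) * x / 6 - (b - a) ^ 2 / 3 * log (b - x))
        (simpsonKernel a b x / (b - x)) x := by
    have hbx : b - x ≠ 0 := by linarith [hx.2]
    have := (((((hasDerivAt_id' x).const_sub b).pow 2).neg.div_const 4).sub
      (((hasDerivAt_id' x).const_mul (5 * (b - a))).div_const 6)).sub
      ((((hasDerivAt_id' x).const_sub b).log hbx).const_mul ((b - a) ^ 2 / 3))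
    exact this.congr_deriv (by unfold simpsonKernel; field_simp; ring)
  have hcont : ContinuousOn (fun x => simpsonKernel a b x / (b - x)) (uIcc a ((a + b) / 2)) :=
    (continuousOn_simpsonKernel_div a b).mono fun x hx => by
      rw [uIcc_of_le (by linarith)] at hx; exact hx.2.trans_lt hm
  rw [integral_abs_eq_of_sign_change (c := (2 * a + b) / 3) (by linarith) (by linarith)
    hG hcont.intervalIntegrable
    (fun x hx => div_nonpos_of_nonpos_of_nonneg (by unfold simpsonKernel; nlinarith [hx.1, hx.2])
      (by linarith [hx.2]))
    (fun x hx => div_nonneg (by unfold simpsonKernel; nlinarith [hx.1, hx.2]) (by linarith [hx.2]))]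
  have hh : b - a ≠ 0 := by linarith
  rw [show b - (a + b) / 2 = (b - a) / 2 by ring,
    show b - (2 * a + b) / 3 = (b - a) * 2 / 3 by ring,
    log_div hh two_ne_zero, log_div (mul_ne_zero hh two_ne_zero) three_ne_zero,
    log_mul hh two_ne_zero, log_div (by norm_num) (by norm_num),
    show (8 : ℝ) = 2 ^ 3 by norm_num, show (9 : ℝ) = 3 ^ 2 by norm_num, log_pow, log_pow]
  push_cast
  ring

theorem abs_simpsonKernel_mul_le {a b x y Ga Gb : ℝ} (hx : x ∈ Ioo a b)
    (hy : y ≤ Ga * ((b - a) / (b - x)) + Gb * ((b - a) / (x - a))) :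
    |simpsonKernel a b x| * y
      ≤ Ga * (b - a) * |simpsonKernel a b x / (b - x)|
        + Gb * (b - a) * |(x - (2 * a + b) / 3) / 2| := by
  have hxa : 0 < x - a := by linarith [hx.1]
  have hbx : 0 < b - x := by linarith [hx.2]
  calc |simpsonKernel a b x| * y
      ≤ |simpsonKernel a b x| * (Ga * ((b - a) / (b - x)) + Gb * ((b - a) / (x - a))) :=
        mul_le_mul_of_nonneg_left hy (abs_nonneg _)
    _ = _ := by
        rw [abs_div, abs_div, abs_of_pos hbx, simpsonKernel, abs_div, abs_mul, abs_of_pos hxa,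
          abs_two]
        field_simp

theorem integral_abs_simpsonKernel_mul_rpow_le {a b q Ga Gb : ℝ} {ψ : ℝ → ℝ} (hab : a < b)
    (hψ : AEStronglyMeasurable ψ (volume.restrict (Ioc a ((a + b) / 2))))
    (hGL : ∀ x ∈ Ioo a b, |ψ x| ^ q ≤ Ga * ((b - a) / (b - x)) + Gb * ((b - a) / (x - a))) :
    IntegrableOn (fun x => |simpsonKernel a b x| * |ψ x| ^ q) (Ioc a ((a + b) / 2)) ∧
      ∫ x in a..(a + b) / 2, |simpsonKernel a b x| * |ψ x| ^ q
        ≤ (b - a) ^ 3 / 2 * ((2 / 3 * log (8 / 9) + 7 / 72) * Ga + 5 / 72 * Gb) := by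
  have ham : a ≤ (a + b) / 2 := by linarith
  have hmb : (a + b) / 2 < b := by linarith
  have hdiv :
      IntervalIntegrable (fun x => |simpsonKernel a b x / (b - x)|) volume a ((a + b) / 2) :=
    ((continuousOn_simpsonKernel_div a b).mono fun x hx => by
      rw [uIcc_of_le ham] at hx; exact hx.2.trans_lt hmb).abs.intervalIntegrable
  have hlin : IntervalIntegrable (fun x => |(x - (2 * a + b) / 3) / 2|) volume a ((a + b) / 2) :=
    (by fun_prop : Continuous fun x : ℝ => |(x - (2 * a + b) / 3) / 2|).intervalIntegrable _ _
  have hψabs := continuous_abs.comp_aestronglyMeasurable hψ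
  have hR := (hdiv.const_mul (Ga * (b - a))).add (hlin.const_mul (Gb * (b - a)))
  have hpt (x : ℝ) (hx : x ∈ Ioo a b) := abs_simpsonKernel_mul_le hx (hGL x hx)
  have hint : IntegrableOn (fun x => |simpsonKernel a b x| * |ψ x| ^ q) (Ioc a ((a + b) / 2)) :=
    ((intervalIntegrable_iff_integrableOn_Ioc_of_le ham).1 hR).mono'
      ((continuous_simpsonKernel a b).abs.aestronglyMeasurable.mul
        (hψabs.aemeasurable.pow_const q).aestronglyMeasurable)
      (ae_restrict_of_forall_mem measurableSet_Ioc fun x hx => by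
        rw [norm_of_nonneg (by positivity)]
        exact hpt x ⟨hx.1, hx.2.trans_lt hmb⟩)
  refine ⟨hint, ?_⟩
  calc ∫ x in a..(a + b) / 2, |simpsonKernel a b x| * |ψ x| ^ q
      ≤ ∫ x in a..(a + b) / 2, Ga * (b - a) * |simpsonKernel a b x / (b - x)|
          + Gb * (b - a) * |(x - (2 * a + b) / 3) / 2| :=
        intervalIntegral.integral_mono_on_of_le_Ioo ham
          ((intervalIntegrable_iff_integrableOn_Ioc_of_le ham).2 hint) hR
          fun x hx => hpt x ⟨hx.1, hx.2.trans hmb⟩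
    _ = _ := by
        rw [intervalIntegral.integral_add (hdiv.const_mul _) (hlin.const_mul _),
          intervalIntegral.integral_const_mul, intervalIntegral.integral_const_mul,
          integral_abs_simpsonKernel_div hab, integral_abs_sub_div_two hab.le]
        ring

theorem abs_integral_simpsonKernel_mul_le {a b q Ga Gb : ℝ} {ψ : ℝ → ℝ} (hab : a < b)
    (hq : 1 ≤ q) (hψ : AEStronglyMeasurable ψ (volume.restrict (Ioc a ((a + b) / 2))))
    (hGL : ∀ x ∈ Ioo a b, |ψ x| ^ q ≤ Ga * ((b - a) / (b - x)) + Gb * ((b - a) / (x - a))) :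
    |∫ x in a..(a + b) / 2, simpsonKernel a b x * ψ x|
      ≤ (b - a) ^ 3 / 2 * (1 / 81) ^ (1 - 1 / q)
        * ((2 / 3 * log (8 / 9) + 7 / 72) * Ga + 5 / 72 * Gb) ^ (1 / q) := by
  have ham : a ≤ (a + b) / 2 := by linarith
  obtain ⟨hint, hle⟩ := integral_abs_simpsonKernel_mul_rpow_le hab hψ hGL
  have hpos : 0 ≤ ∫ x in a..(a + b) / 2, |simpsonKernel a b x| * |ψ x| ^ q :=
    intervalIntegral.integral_nonneg ham fun x _ => by positivity
  have hX := (mul_nonneg_iff_of_pos_left (by linarith [pow_pos (sub_pos.2 hab) 3])).1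
    (hpos.trans hle)
  have holder := integral_weighted_le_rpow_mul_rpow hq (fun x => abs_nonneg _)
    (fun x => abs_nonneg _) (continuous_simpsonKernel a b).abs.integrableOn_Ioc
    (continuous_abs.comp_aestronglyMeasurable hψ) hint
  simp only [← intervalIntegral.integral_of_le ham] at holder
  calc |∫ x in a..(a + b) / 2, simpsonKernel a b x * ψ x|
      ≤ ∫ x in a..(a + b) / 2, |simpsonKernel a b x| * |ψ x| := by
        simpa only [abs_mul] using
          intervalIntegral.abs_integral_le_integral_abs
            (f := fun x => simpsonKernel a b x * ψ x) ham
    _ ≤ _ := holder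
    _ ≤ ((b - a) ^ 3 / 2 * (1 / 81)) ^ (1 - 1 / q)
          * ((b - a) ^ 3 / 2 * ((2 / 3 * log (8 / 9) + 7 / 72) * Ga + 5 / 72 * Gb)) ^ (1 / q) := by
        rw [integral_abs_simpsonKernel hab.le,
          show (b - a) ^ 3 / 162 = (b - a) ^ 3 / 2 * (1 / 81) by ring]
        exact mul_le_mul_of_nonneg_left (rpow_le_rpow hpos hle (by positivity)) (by positivity)
    _ = _ := by
        rw [mul_rpow_one_sub_mul_mul_rpow (by positivity) (by norm_num) hX, mul_assoc]

theorem abs_integral_simpsonKernel_swap_mul_le {a b q Ga Gb : ℝ} {ψ : ℝ → ℝ} (hab : a < b)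
    (hq : 1 ≤ q) (hψ : IntervalIntegrable ψ volume a b)
    (hGL : ∀ x ∈ Ioo a b, |ψ x| ^ q ≤ Ga * ((b - a) / (b - x)) + Gb * ((b - a) / (x - a))) :
    |∫ x in (a + b) / 2..b, simpsonKernel b a x * ψ x|
      ≤ (b - a) ^ 3 / 2 * (1 / 81) ^ (1 - 1 / q)
        * ((2 / 3 * log (8 / 9) + 7 / 72) * Gb + 5 / 72 * Ga) ^ (1 / q) := by
  have hψ' : IntervalIntegrable (fun x => ψ (a + b - x)) volume a b := by
    simpa using (hψ.comp_sub_left (a + b)).symm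
  rw [integral_simpsonKernel_swap]
  refine abs_integral_simpsonKernel_mul_le hab hq
    (hψ'.1.mono_set (Ioc_subset_Ioc_right (by linarith))).aestronglyMeasurable fun x hx => ?_
  have := hGL (a + b - x) ⟨by linarith [hx.2], by linarith [hx.1]⟩
  rw [show b - (a + b - x) = x - a by ring, show a + b - x - a = b - x by ring] at this
  linarith

theorem godunova_levin_simpson_power_ineq_general
    (I : Set ℝ) (hI' : I.OrdConnected)
    (a b : ℝ) (ha : a ∈ I) (hb : b ∈ I) (hab : a < b)
    (f f' f'' : ℝ → ℝ)
    (hf' : ∀ x ∈ I, HasDerivAt f (f' x) x)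
    (hf'' : ∀ x ∈ I, HasDerivAt f' (f'' x) x)
    (hint : IntervalIntegrable f'' volume a b)
    (q : ℝ) (hq : 1 ≤ q)
    (hQ : GodunovaLevin I (fun x => |f'' x| ^ q)) :
    |(1 / 6) * (f a + 4 * f ((a + b) / 2) + f b) - (1 / (b - a)) * ∫ x in a..b, f x|
      ≤ ((b - a) ^ 2 / 2) * ((1 / 81 : ℝ)) ^ (1 - 1 / q) *
        (((5 / 72) * |f'' a| ^ q
            + ((2 / 3) * Real.log (8 / 9) + 7 / 72) * |f'' b| ^ q) ^ (1 / q)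
          + (((2 / 3) * Real.log (8 / 9) + 7 / 72) * |f'' a| ^ q
            + (5 / 72) * |f'' b| ^ q) ^ (1 / q)) := by
  have hh : 0 < b - a := sub_pos.2 hab
  have hsub : uIcc a b ⊆ I := uIcc_of_le hab.le ▸ hI'.out ha hb
  have hGL (x : ℝ) (hx : x ∈ Ioo a b) := hQ.le_of_mem_Ioo ha hb hx
  have hleft := abs_integral_simpsonKernel_mul_le hab hq
    (hint.1.mono_set (Ioc_subset_Ioc_right (by linarith))).aestronglyMeasurable hGL
  have hright := abs_integral_simpsonKernel_swap_mul_le hab hq hint hGL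
  have hsimpson := integral_simpsonKernel_mul_add (fun x hx => hf' x (hsub hx))
    (fun x hx => hf'' x (hsub hx)) hint
  set S₁ := ∫ x in a..(a + b) / 2, simpsonKernel a b x * f'' x
  set S₂ := ∫ x in (a + b) / 2..b, simpsonKernel b a x * f'' x
  have herror : (1 / 6) * (f a + 4 * f ((a + b) / 2) + f b) - (1 / (b - a)) * ∫ x in a..b, f x
      = -(S₁ + S₂) / (b - a) := by
    rw [hsimpson]; field_simp; ring
  rw [herror, abs_div, abs_neg, abs_of_pos hh]
  refine (div_le_div_of_nonneg_right ((abs_add_le _ _).trans (add_le_add hleft hright))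
    hh.le).trans_eq ?_
  rw [add_comm (5 / 72 * |f'' a| ^ q)]
  field_simp
  ring

theorem godunova_levin_simpson_power_ineq
    (I : Set ℝ) (hI : IsOpen I) (hI' : I.OrdConnected)
    (a b : ℝ) (ha : a ∈ I) (hb : b ∈ I) (hab : a < b)
    (f f' f'' : ℝ → ℝ)
    (hf' : ∀ x ∈ I, HasDerivAt f (f' x) x)
    (hf'' : ∀ x ∈ I, HasDerivAt f' (f'' x) x)
    (hint : IntervalIntegrable f'' volume a b)
    (q : ℝ) (hq : 1 ≤ q)
    (hQ : GodunovaLevin I (fun x => |f'' x| ^ q)) :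
    |(1 / 6) * (f a + 4 * f ((a + b) / 2) + f b) - (1 / (b - a)) * ∫ x in a..b, f x|
      ≤ ((b - a) ^ 2 / 2) * ((1 / 81 : ℝ)) ^ (1 - 1 / q) *
        (((5 / 72) * |f'' a| ^ q
            + ((2 / 3) * Real.log (8 / 9) + 7 / 72) * |f'' b| ^ q) ^ (1 / q)
          + (((2 / 3) * Real.log (8 / 9) + 7 / 72) * |f'' a| ^ q
            + (5 / 72) * |f'' b| ^ q) ^ (1 / q)) :=
  godunova_levin_simpson_power_ineq_general I hI' a b ha hb hab f f' f'' hf' hf'' hint q hq hQ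
end

section
/- Let a < b be real numbers, let f : [a,b] → ℝ be nonnegative and integrable, let 0 ≤ λ ≤ 1/2, and suppose g : (0,1) → ℝ satisfies g(t) ≤ A/t + B/(1−t) for nonnegative constants A, B (here g(t) = |f''(t·a + (1−t)·b)|^q with A = |f''(a)|^q, B = |f''(b)|^q in the application). Then ∫₀^{1/2} |t·(t−λ)|·g(t) dt ≤ [λ² − (4λ−1)/8]·A + [(1−λ)·ln(2(1−λ)²) + (20λ − 8λ² − 5)/8]·B. -/
/-!
Since `g t ≤ A / t + B / (1 - t)` and `g ≥ 0`, the integrand is squeezed between `0` and the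
continuous kernel `A |t - λ| + B t |t - λ| / (1 - t)` on `(0, 1/2]`; it remains to integrate
that kernel explicitly, splitting `[0, 1/2]` at `λ`.
-/

open MeasureTheory Set Real intervalIntegral

theorem integral_mono_of_nonneg_on_Ioc {f g : ℝ → ℝ} {a b : ℝ} (hab : a ≤ b)
    (hg : IntervalIntegrable g volume a b) (hf : ∀ x ∈ Ioc a b, 0 ≤ f x)
    (hfg : ∀ x ∈ Ioc a b, f x ≤ g x) :
    ∫ x in a..b, f x ≤ ∫ x in a..b, g x := by
  rw [integral_of_le hab, integral_of_le hab]
  exact integral_mono_of_nonneg ((ae_restrict_mem measurableSet_Ioc).mono hf)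
    ((intervalIntegrable_iff_integrableOn_Ioc_of_le hab).1 hg)
    ((ae_restrict_mem measurableSet_Ioc).mono hfg)

theorem integral_mul_abs_sub {h : ℝ → ℝ} {p c q : ℝ} (hpc : p ≤ c) (hcq : c ≤ q)
    (hh : ContinuousOn h (Icc p q)) :
    ∫ t in p..q, h t * |t - c| = (∫ t in c..q, h t * (t - c)) - ∫ t in p..c, h t * (t - c) := by
  have hint : ∀ u v, p ≤ u → u ≤ v → v ≤ q →
      IntervalIntegrable (fun t => h t * |t - c|) volume u v := fun u v hpu huv hvq =>
    ContinuousOn.intervalIntegrable <|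
      (hh.mono (by rw [uIcc_of_le huv]; exact Icc_subset_Icc hpu hvq)).mul (by fun_prop)
  rw [← integral_add_adjacent_intervals (hint p c le_rfl hpc hcq)
    (hint c q hpc hcq le_rfl), sub_eq_neg_add, ← intervalIntegral.integral_neg]
  congr 1 <;> refine integral_congr fun t ht => ?_
  · rw [uIcc_of_le hpc] at ht
    simp only [abs_of_nonpos (sub_nonpos.2 ht.2)]
    ring
  · rw [uIcc_of_le hcq] at ht
    simp only [abs_of_nonneg (sub_nonneg.2 ht.1)]

theorem integral_abs_sub {p c q : ℝ} (hpc : p ≤ c) (hcq : c ≤ q) :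
    ∫ t in p..q, |t - c| = ((c - p) ^ 2 + (q - c) ^ 2) / 2 := by
  have h := integral_mul_abs_sub (h := fun _ => 1) hpc hcq continuousOn_const
  simp only [one_mul] at h
  rw [h, integral_comp_sub_right (fun x => x), integral_comp_sub_right (fun x => x),
    integral_id, integral_id]
  ring

theorem continuousOn_div_one_sub {s : Set ℝ} (hs : ∀ t ∈ s, t < 1) :
    ContinuousOn (fun t => t / (1 - t)) s :=
  continuousOn_id.div (by fun_prop) fun t ht => sub_ne_zero.2 (hs t ht).ne'

noncomputable def kernelPrimitive (c s : ℝ) : ℝ :=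
  -(1 - s) ^ 2 / 2 + (2 - c) * (1 - s) - (1 - c) * log (1 - s)

theorem hasDerivAt_kernelPrimitive (c : ℝ) {t : ℝ} (ht : t < 1) :
    HasDerivAt (kernelPrimitive c) (t / (1 - t) * (t - c)) t := by
  have h1t : 1 - t ≠ 0 := by linarith
  have hu : HasDerivAt (fun s : ℝ => 1 - s) (-1) t := by
    simpa using (hasDerivAt_id t).const_sub 1
  refine ((((hu.pow 2).neg.div_const 2).add (hu.const_mul (2 - c))).sub
    ((hu.log h1t).const_mul (1 - c))).congr_deriv ?_
  field_simp
  ring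

theorem integral_div_one_sub_mul_sub (c : ℝ) {p q : ℝ} (hp : p < 1) (hq : q < 1) :
    ∫ t in p..q, t / (1 - t) * (t - c) = kernelPrimitive c q - kernelPrimitive c p := by
  have hlt : ∀ t ∈ uIcc p q, t < 1 := fun t ht => ht.2.trans_lt (max_lt hp hq)
  refine integral_eq_sub_of_hasDerivAt (fun t ht => hasDerivAt_kernelPrimitive c (hlt t ht))
    (ContinuousOn.intervalIntegrable ?_)
  exact (continuousOn_div_one_sub hlt).mul (by fun_prop)

theorem integral_div_one_sub_mul_abs_sub {p c q : ℝ} (hpc : p ≤ c) (hcq : c ≤ q) (hq : q < 1) :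
    ∫ t in p..q, t / (1 - t) * |t - c|
      = kernelPrimitive c p + kernelPrimitive c q - 2 * kernelPrimitive c c := by
  have hc : c < 1 := hcq.trans_lt hq
  rw [integral_mul_abs_sub hpc hcq, integral_div_one_sub_mul_sub c hc hq,
    integral_div_one_sub_mul_sub c (hpc.trans_lt hc) hc]
  · ring
  · exact continuousOn_div_one_sub fun t ht => ht.2.trans_lt hq

theorem integral_zero_half_div_one_sub_mul_abs_sub {c : ℝ} (hc0 : 0 ≤ c) (hc : c ≤ 1 / 2) :
    ∫ t in (0 : ℝ)..1 / 2, t / (1 - t) * |t - c|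
      = (1 - c) * log (2 * (1 - c) ^ 2) + (20 * c - 8 * c ^ 2 - 5) / 8 := by
  have hlog_half : log (1 - 1 / 2 : ℝ) = -log 2 := by
    rw [show (1 - 1 / 2 : ℝ) = 2⁻¹ by norm_num, log_inv]
  have hlog : log (2 * (1 - c) ^ 2) = log 2 + 2 * log (1 - c) := by
    rw [log_mul two_ne_zero (pow_ne_zero 2 (by linarith)), log_pow]
    push_cast
    ring
  rw [integral_div_one_sub_mul_abs_sub hc0 hc (by norm_num)]
  simp only [kernelPrimitive, sub_zero, log_one, hlog_half, hlog]
  ring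

theorem abs_mul_sub_mul_le_of_le_div_add_div {A B c t y : ℝ} (ht0 : 0 < t) (ht1 : t < 1)
    (hy : y ≤ A / t + B / (1 - t)) :
    |t * (t - c)| * y ≤ A * |t - c| + B * (t / (1 - t) * |t - c|) :=
  calc |t * (t - c)| * y ≤ |t * (t - c)| * (A / t + B / (1 - t)) :=
        mul_le_mul_of_nonneg_left hy (abs_nonneg _)
    _ = A * |t - c| + B * (t / (1 - t) * |t - c|) := by
        rw [abs_mul, abs_of_pos ht0]
        field_simp [(by linarith : 1 - t ≠ 0)]

theorem kernel_integral_bound_left_first_case_general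
    (lam : ℝ) (hlam0 : 0 ≤ lam) (hlam1 : lam ≤ 1 / 2)
    (g : ℝ → ℝ) (hg0 : ∀ t ∈ Ioo (0 : ℝ) 1, 0 ≤ g t)
    (A B : ℝ)
    (hgb : ∀ t ∈ Ioo (0 : ℝ) 1, g t ≤ A / t + B / (1 - t)) :
    (∫ t in (0 : ℝ)..(1 / 2), |t * (t - lam)| * g t)
      ≤ (lam ^ 2 - (4 * lam - 1) / 8) * A
        + ((1 - lam) * Real.log (2 * (1 - lam) ^ 2)
            + (20 * lam - 8 * lam ^ 2 - 5) / 8) * B := by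
  have hmem : ∀ t ∈ Ioc (0 : ℝ) (1 / 2), t ∈ Ioo (0 : ℝ) 1 :=
    fun t ht => ⟨ht.1, by linarith [ht.2]⟩
  have hAint : IntervalIntegrable (fun t => A * |t - lam|) volume 0 (1 / 2) :=
    (by fun_prop : Continuous fun t => A * |t - lam|).intervalIntegrable _ _
  have hBint : IntervalIntegrable (fun t => B * (t / (1 - t) * |t - lam|)) volume 0 (1 / 2) :=
    ContinuousOn.intervalIntegrable <| continuousOn_const.mul <|
      (continuousOn_div_one_sub fun _ ht => ht.2.trans_lt (max_lt (by norm_num) (by norm_num))).mul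
        (by fun_prop)
  calc (∫ t in (0 : ℝ)..(1 / 2), |t * (t - lam)| * g t)
      ≤ ∫ t in (0 : ℝ)..(1 / 2), A * |t - lam| + B * (t / (1 - t) * |t - lam|) := by
        exact integral_mono_of_nonneg_on_Ioc (by norm_num) (hAint.add hBint)
          (fun t ht => mul_nonneg (abs_nonneg _) (hg0 t (hmem t ht))) fun t ht =>
          abs_mul_sub_mul_le_of_le_div_add_div (hmem t ht).1 (hmem t ht).2 (hgb t (hmem t ht))
    _ = A * (∫ t in (0 : ℝ)..(1 / 2), |t - lam|)
          + B * ∫ t in (0 : ℝ)..(1 / 2), t / (1 - t) * |t - lam| := by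
        rw [integral_add hAint hBint, intervalIntegral.integral_const_mul,
          intervalIntegral.integral_const_mul]
    _ = _ := by
        rw [integral_abs_sub hlam0 hlam1, integral_zero_half_div_one_sub_mul_abs_sub hlam0 hlam1]
        ring

theorem kernel_integral_bound_left_first_case
    (a b : ℝ) (hab : a < b)
    (f : ℝ → ℝ) (hf0 : ∀ x ∈ Icc a b, 0 ≤ f x)
    (hfint : IntervalIntegrable f volume a b)
    (lam : ℝ) (hlam0 : 0 ≤ lam) (hlam1 : lam ≤ 1 / 2)
    (g : ℝ → ℝ) (hg : Measurable g) (hg0 : ∀ t ∈ Ioo (0 : ℝ) 1, 0 ≤ g t)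
    (A B : ℝ) (hA : 0 ≤ A) (hB : 0 ≤ B)
    (hgb : ∀ t ∈ Ioo (0 : ℝ) 1, g t ≤ A / t + B / (1 - t)) :
    (∫ t in (0 : ℝ)..(1 / 2), |t * (t - lam)| * g t)
      ≤ (lam ^ 2 - (4 * lam - 1) / 8) * A
        + ((1 - lam) * Real.log (2 * (1 - lam) ^ 2)
            + (20 * lam - 8 * lam ^ 2 - 5) / 8) * B :=
  kernel_integral_bound_left_first_case_general lam hlam0 hlam1 g hg0 A B hgb
end

section
/- Let 1/2 ≤ λ ≤ 1 and suppose g : (0,1) → ℝ is nonnegative, measurable, and satisfies g(t) ≤ A/t + B/(1−t) for all t ∈ (0,1), where A, B ≥ 0 are constants. Then ∫₀^{1/2} |t·(t−λ)|·g(t) dt ≤ ((4λ−1)/8)·A + [(5−4λ)/8 − (λ−1)·ln(1/2)]·B. -/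
/-!
On `(0, 1/2]` we have `t ≤ λ`, so `|t (t - λ)| = t (λ - t) ≥ 0`, and multiplying the bound on `g`
by this weight gives the explicit majorant `A (λ - t) + B t (λ - t) / (1 - t)`. The second term
splits as `t + (1 - λ) - (1 - λ) / (1 - t)`, so the majorant has an elementary primitive, and its
integral over `[0, 1/2]` is the right-hand side.
-/

open MeasureTheory Set Real

noncomputable def kernelMajorant (lam A B t : ℝ) : ℝ :=
  A * (lam - t) + B * (t + (1 - lam) - (1 - lam) / (1 - t))

noncomputable def kernelMajorantPrimitive (lam A B t : ℝ) : ℝ :=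
  A * (lam * t - t ^ 2 / 2) + B * (t ^ 2 / 2 + (1 - lam) * t + (1 - lam) * log (1 - t))

section

variable {lam A B : ℝ}

lemma mul_sub_mul_add_div_eq_kernelMajorant {t : ℝ} (ht0 : t ≠ 0) (ht1 : t ≠ 1) :
    t * (lam - t) * (A / t + B / (1 - t)) = kernelMajorant lam A B t := by
  have h1t : 1 - t ≠ 0 := sub_ne_zero.mpr ht1.symm
  unfold kernelMajorant
  field_simp
  ring

lemma abs_mul_sub_mul_le_kernelMajorant {t x : ℝ} (ht : t ∈ Ioo 0 1) (htlam : t ≤ lam)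
    (hx : x ≤ A / t + B / (1 - t)) :
    |t * (t - lam)| * x ≤ kernelMajorant lam A B t := by
  have hweight : |t * (t - lam)| = t * (lam - t) := by
    rw [abs_of_nonpos (mul_nonpos_of_nonneg_of_nonpos ht.1.le (sub_nonpos.mpr htlam))]
    ring
  rw [hweight, ← mul_sub_mul_add_div_eq_kernelMajorant ht.1.ne' ht.2.ne]
  exact mul_le_mul_of_nonneg_left hx (mul_nonneg ht.1.le (sub_nonneg.mpr htlam))

lemma hasDerivAt_kernelMajorantPrimitive {t : ℝ} (ht : t ≠ 1) :
    HasDerivAt (kernelMajorantPrimitive lam A B) (kernelMajorant lam A B t) t := by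
  have hlog : HasDerivAt (fun s => log (1 - s)) (-1 / (1 - t)) t := by
    simpa using ((hasDerivAt_id t).const_sub 1).log (sub_ne_zero.mpr ht.symm)
  refine ((((hasDerivAt_id t).const_mul lam).sub ((hasDerivAt_pow 2 t).div_const 2)).const_mul A).add
    (((((hasDerivAt_pow 2 t).div_const 2).add ((hasDerivAt_id t).const_mul (1 - lam))).add
      (hlog.const_mul (1 - lam))).const_mul B) |>.congr_deriv ?_
  unfold kernelMajorant
  push_cast
  ring

lemma continuousOn_kernelMajorant : ContinuousOn (kernelMajorant lam A B) (Iio 1) := by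
  unfold kernelMajorant
  fun_prop (disch := intro t ht; exact sub_ne_zero.mpr (ne_of_gt ht))

lemma intervalIntegrable_kernelMajorant {a b : ℝ} (ha : a < 1) (hb : b < 1) :
    IntervalIntegrable (kernelMajorant lam A B) volume a b :=
  (continuousOn_kernelMajorant.mono fun _ ht => (max_lt ha hb).trans_le' ht.2).intervalIntegrable

lemma integral_kernelMajorant {a b : ℝ} (ha : a < 1) (hb : b < 1) :
    ∫ t in a..b, kernelMajorant lam A B t
      = kernelMajorantPrimitive lam A B b - kernelMajorantPrimitive lam A B a :=
  intervalIntegral.integral_eq_sub_of_hasDerivAt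
    (fun _ ht => hasDerivAt_kernelMajorantPrimitive ((max_lt ha hb).trans_le' ht.2).ne)
    (intervalIntegrable_kernelMajorant ha hb)

end

theorem kernel_integral_bound_left_second_case_general
    (lam : ℝ) (hlam0 : 1 / 2 ≤ lam)
    (g : ℝ → ℝ) (hg0 : ∀ t ∈ Ioo (0 : ℝ) 1, 0 ≤ g t)
    (A B : ℝ)
    (hgb : ∀ t ∈ Ioo (0 : ℝ) 1, g t ≤ A / t + B / (1 - t)) :
    (∫ t in (0 : ℝ)..(1 / 2), |t * (t - lam)| * g t)
      ≤ ((4 * lam - 1) / 8) * A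
        + ((5 - 4 * lam) / 8 - (lam - 1) * Real.log (1 / 2)) * B := by
  have hhalf : (0 : ℝ) ≤ 1 / 2 := by norm_num
  have hmem : ∀ t ∈ Ioc (0 : ℝ) (1 / 2), t ∈ Ioo (0 : ℝ) 1 :=
    fun t ht => ⟨ht.1, ht.2.trans_lt (by norm_num)⟩
  calc (∫ t in (0 : ℝ)..(1 / 2), |t * (t - lam)| * g t)
      ≤ ∫ t in (0 : ℝ)..(1 / 2), kernelMajorant lam A B t := by
        rw [intervalIntegral.integral_of_le hhalf, intervalIntegral.integral_of_le hhalf]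
        refine setIntegral_mono_of_nonneg (fun t ht => ?_) (fun t ht => ?_) ?_
        · exact mul_nonneg (abs_nonneg _) (hg0 t (hmem t ht))
        · exact abs_mul_sub_mul_le_kernelMajorant (hmem t ht) (ht.2.trans hlam0)
            (hgb t (hmem t ht))
        · exact (intervalIntegrable_kernelMajorant (by norm_num) (by norm_num)).1
    _ = _ := by
        rw [integral_kernelMajorant (by norm_num) (by norm_num)]
        norm_num [kernelMajorantPrimitive]
        ring

theorem kernel_integral_bound_left_second_case
    (lam : ℝ) (hlam0 : 1 / 2 ≤ lam) (hlam1 : lam ≤ 1)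
    (g : ℝ → ℝ) (hg : Measurable g) (hg0 : ∀ t ∈ Ioo (0 : ℝ) 1, 0 ≤ g t)
    (A B : ℝ) (hA : 0 ≤ A) (hB : 0 ≤ B)
    (hgb : ∀ t ∈ Ioo (0 : ℝ) 1, g t ≤ A / t + B / (1 - t)) :
    (∫ t in (0 : ℝ)..(1 / 2), |t * (t - lam)| * g t)
      ≤ ((4 * lam - 1) / 8) * A
        + ((5 - 4 * lam) / 8 - (lam - 1) * Real.log (1 / 2)) * B :=
  kernel_integral_bound_left_second_case_general lam hlam0 g hg0 A B hgb
end

section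
/- Let 1/2 ≤ λ ≤ 1 and suppose g : (0,1) → ℝ is nonnegative, measurable, and satisfies g(t) ≤ A/t + B/(1−t) for all t ∈ (0,1), where A, B ≥ 0 are constants. Then ∫_{1/2}^{1} |(1−t)·(1−λ−t)|·g(t) dt ≤ [(5−4λ)/8 − (λ−1)·ln(1/2)]·A + ((4λ−1)/8)·B. -/
/-!
On `(1/2, 1)` the hypothesis `1/2 ≤ λ` fixes the sign of the kernel,
`|(1-t)(1-λ-t)| = (1-t)(t+λ-1)`, so the bound on `g` yields the majorant
`A (1-t)(t+λ-1)/t + B (t+λ-1)`, which has an elementary antiderivative. Since `g ≥ 0`,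
the comparison needs no integrability of `g`: a non-integrable integrand has integral `0`,
which is below the integral of a nonnegative majorant.
-/

open MeasureTheory Set Real

theorem intervalIntegral.integral_mono_of_nonneg_on_Ioo {μ : Measure ℝ} [NullSingletonClass μ]
    {f g : ℝ → ℝ} {a b : ℝ} (hab : a ≤ b) (hf : ∀ x ∈ Ioo a b, 0 ≤ f x)
    (hfg : ∀ x ∈ Ioo a b, f x ≤ g x) (hg : IntervalIntegrable g μ a b) :
    ∫ x in a..b, f x ∂μ ≤ ∫ x in a..b, g x ∂μ := by
  simp only [intervalIntegral.integral_of_le hab, integral_Ioc_eq_integral_Ioo]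
  exact setIntegral_mono_of_nonneg hf hfg (hg.1.mono_set Ioo_subset_Ioc_self)

theorem abs_one_sub_mul_sub_mul_le {lam t x A B : ℝ} (ht0 : 0 < t) (ht1 : t < 1)
    (hlam : 1 - lam ≤ t) (hx : x ≤ A / t + B / (1 - t)) :
    |(1 - t) * (1 - lam - t)| * x ≤ A * ((1 - t) * (t + lam - 1) / t) + B * (t + lam - 1) := by
  have hk : |(1 - t) * (1 - lam - t)| = (1 - t) * (t + lam - 1) := by
    rw [abs_of_nonpos (by nlinarith)]; ring
  calc |(1 - t) * (1 - lam - t)| * x ≤ (1 - t) * (t + lam - 1) * (A / t + B / (1 - t)) := by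
        rw [hk]; exact mul_le_mul_of_nonneg_left hx (by nlinarith)
    _ = A * ((1 - t) * (t + lam - 1) / t) + B * (t + lam - 1) := by
        field_simp [ht0.ne', (sub_pos.2 ht1).ne']

theorem hasDerivAt_one_sub_mul_div_self (lam : ℝ) {t : ℝ} (ht : t ≠ 0) :
    HasDerivAt (fun x => (2 - lam) * x - x ^ 2 / 2 + (lam - 1) * log x)
      ((1 - t) * (t + lam - 1) / t) t := by
  have h := (((hasDerivAt_id t).const_mul (2 - lam)).sub ((hasDerivAt_pow 2 t).div_const 2)).add
    ((hasDerivAt_log ht).const_mul (lam - 1))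
  refine h.congr_deriv ?_
  field_simp
  ring

theorem continuousOn_one_sub_mul_div_self (lam : ℝ) :
    ContinuousOn (fun t : ℝ => (1 - t) * (t + lam - 1) / t) (Icc (1 / 2) 1) :=
  ContinuousOn.div (by fun_prop) continuousOn_id fun t ht => by
    have : (1 / 2 : ℝ) ≤ t := ht.1
    show t ≠ 0; positivity

theorem integral_half_one_one_sub_mul_div_self (lam : ℝ) :
    ∫ t in (1 / 2 : ℝ)..1, (1 - t) * (t + lam - 1) / t
      = (5 - 4 * lam) / 8 - (lam - 1) * log (1 / 2) := by
  rw [intervalIntegral.integral_eq_sub_of_hasDerivAt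
    (f := fun x => (2 - lam) * x - x ^ 2 / 2 + (lam - 1) * log x)]
  · simp only [log_one]; ring
  · intro t ht
    rw [uIcc_of_le (by norm_num)] at ht
    exact hasDerivAt_one_sub_mul_div_self lam (by linarith [ht.1])
  · exact (continuousOn_one_sub_mul_div_self lam).intervalIntegrable_of_Icc (by norm_num)

theorem integral_half_one_add_sub_one (lam : ℝ) :
    ∫ t in (1 / 2 : ℝ)..1, (t + lam - 1) = (4 * lam - 1) / 8 := by
  simp
  ring

theorem kernel_integral_bound_right_second_case_general
    (lam : ℝ) (hlam0 : 1 / 2 ≤ lam)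
    (g : ℝ → ℝ) (hg0 : ∀ t ∈ Ioo (0 : ℝ) 1, 0 ≤ g t)
    (A B : ℝ)
    (hgb : ∀ t ∈ Ioo (0 : ℝ) 1, g t ≤ A / t + B / (1 - t)) :
    (∫ t in (1 / 2 : ℝ)..1, |(1 - t) * (1 - lam - t)| * g t)
      ≤ ((5 - 4 * lam) / 8 - (lam - 1) * Real.log (1 / 2)) * A
        + ((4 * lam - 1) / 8) * B := by
  have hIoo : ∀ t ∈ Ioo (1 / 2 : ℝ) 1, t ∈ Ioo (0 : ℝ) 1 := fun t ht =>
    ⟨by linarith [ht.1], ht.2⟩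
  have hk : IntervalIntegrable (fun t : ℝ => (1 - t) * (t + lam - 1) / t) volume (1 / 2) 1 :=
    (continuousOn_one_sub_mul_div_self lam).intervalIntegrable_of_Icc (by norm_num)
  have hl : IntervalIntegrable (fun t : ℝ => t + lam - 1) volume (1 / 2) 1 :=
    (by fun_prop : Continuous fun t : ℝ => t + lam - 1).intervalIntegrable _ _
  calc (∫ t in (1 / 2 : ℝ)..1, |(1 - t) * (1 - lam - t)| * g t)
      ≤ ∫ t in (1 / 2 : ℝ)..1, A * ((1 - t) * (t + lam - 1) / t) + B * (t + lam - 1) :=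
        intervalIntegral.integral_mono_of_nonneg_on_Ioo (by norm_num)
          (fun t ht => mul_nonneg (abs_nonneg _) (hg0 t (hIoo t ht)))
          (fun t ht => abs_one_sub_mul_sub_mul_le (hIoo t ht).1 ht.2 (by linarith [ht.1])
            (hgb t (hIoo t ht)))
          ((hk.const_mul A).add (hl.const_mul B))
    _ = _ := by
        rw [intervalIntegral.integral_add (hk.const_mul A) (hl.const_mul B),
          intervalIntegral.integral_const_mul, intervalIntegral.integral_const_mul,
          integral_half_one_one_sub_mul_div_self, integral_half_one_add_sub_one]
        ring

theorem kernel_integral_bound_right_second_case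
    (lam : ℝ) (hlam0 : 1 / 2 ≤ lam) (hlam1 : lam ≤ 1)
    (g : ℝ → ℝ) (hg : Measurable g) (hg0 : ∀ t ∈ Ioo (0 : ℝ) 1, 0 ≤ g t)
    (A B : ℝ) (hA : 0 ≤ A) (hB : 0 ≤ B)
    (hgb : ∀ t ∈ Ioo (0 : ℝ) 1, g t ≤ A / t + B / (1 - t)) :
    (∫ t in (1 / 2 : ℝ)..1, |(1 - t) * (1 - lam - t)| * g t)
      ≤ ((5 - 4 * lam) / 8 - (lam - 1) * Real.log (1 / 2)) * A
        + ((4 * lam - 1) / 8) * B :=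
  kernel_integral_bound_right_second_case_general lam hlam0 g hg0 A B hgb
end
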